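/- arXiv:1807.09814 — 3 statements merged into one kernel-verified Lean document; each statement's English description precedes it below -/
import Mathlib

section
/- Let f : ℝⁿ → ℝⁿ, Φ, V : ℝⁿ → ℝ with V C¹, λ > 0, C ∈ ℝ, and suppose Φ ≤ V on ℝⁿ and λ (f · ∇V) ≤ C - V on ℝⁿ. If S ⊆ ℝⁿ is compact and invariant under the flow of ẋ = f(x) (every point of S lies on a complete trajectory contained in S), then Φ(x) ≤ C for all x ∈ S. -/
open RealInnerProductSpace Filter Topology

/-! At a point `x` of a compact invariant set where `V` is maximal on the set, `V` is also
maximal along the trajectory through `x`, so the derivative `⟪f x, ∇V x⟫` of `V` along the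
flow vanishes there. The Lyapunov inequality at `x` then reads `0 ≤ C - V x`, so `V ≤ C` on
the whole set, and `Φ ≤ V` finishes. -/

section
variable {E : Type*} [NormedAddCommGroup E] [InnerProductSpace ℝ E] [CompleteSpace E]

theorem inner_gradient_eq_zero_of_isMaxOn_of_hasDerivAt {V : E → ℝ} {S : Set E} {x v : E}
    {γ : ℝ → E} (hV : DifferentiableAt ℝ V x) (hmax : IsMaxOn V S x) (hγ0 : γ 0 = x)
    (hγS : ∀ᶠ t in 𝓝 0, γ t ∈ S) (hγ : HasDerivAt γ v 0) :
    ⟪v, gradient V x⟫ = 0 := by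
  have hderiv : HasDerivAt (V ∘ γ) ⟪gradient V x, v⟫ 0 := by
    rw [← hγ0] at hV
    simpa [hγ0] using hV.hasGradientAt.hasFDerivAt.comp_hasDerivAt 0 hγ
  have hlocmax : IsLocalMax (V ∘ γ) 0 :=
    hγS.mono fun t ht => by simpa [hγ0] using hmax ht
  rw [real_inner_comm]
  exact hlocmax.hasDerivAt_eq_zero hderiv

theorem IsCompact.exists_isMaxOn_inner_gradient_eq_zero {f : E → E} {V : E → ℝ} {S : Set E}
    (hV : Differentiable ℝ V) (hS : IsCompact S) (hne : S.Nonempty)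
    (hInv : ∀ x₀ ∈ S, ∃ γ : ℝ → E,
      γ 0 = x₀ ∧ (∀ t : ℝ, γ t ∈ S) ∧ (∀ t : ℝ, HasDerivAt γ (f (γ t)) t)) :
    ∃ x ∈ S, IsMaxOn V S x ∧ ⟪f x, gradient V x⟫ = 0 := by
  obtain ⟨x, hxS, hmax⟩ := hS.exists_isMaxOn hne hV.continuous.continuousOn
  obtain ⟨γ, hγ0, hγS, hγ⟩ := hInv x hxS
  refine ⟨x, hxS, hmax, ?_⟩
  have hγ' := hγ 0
  rw [hγ0] at hγ'
  exact inner_gradient_eq_zero_of_isMaxOn_of_hasDerivAt (hV x) hmax hγ0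
    (Eventually.of_forall hγS) hγ'

end

theorem stmt_3_general (n : ℕ) (f : EuclideanSpace ℝ (Fin n) → EuclideanSpace ℝ (Fin n))
    (Φ V : EuclideanSpace ℝ (Fin n) → ℝ) (hV : ContDiff ℝ 1 V)
    (lam C : ℝ)
    (hPhi : ∀ y, Φ y ≤ V y)
    (hLyap : ∀ y, lam * ⟪f y, gradient V y⟫ ≤ C - V y)
    (S : Set (EuclideanSpace ℝ (Fin n))) (hS : IsCompact S)
    (hInv : ∀ x₀ ∈ S, ∃ γ : ℝ → EuclideanSpace ℝ (Fin n),
      γ 0 = x₀ ∧ (∀ t : ℝ, γ t ∈ S) ∧ (∀ t : ℝ, HasDerivAt γ (f (γ t)) t)) :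
    ∀ x ∈ S, Φ x ≤ C := by
  intro y hy
  obtain ⟨x, -, hmax, hzero⟩ :=
    hS.exists_isMaxOn_inner_gradient_eq_zero (hV.differentiable one_ne_zero) ⟨y, hy⟩ hInv
  have hVx : V x ≤ C := by simpa [hzero] using hLyap x
  exact (hPhi y).trans ((hmax hy).trans hVx)

/-- On a compact invariant set, the bounding framework implies `Φ ≤ C`. -/
theorem stmt_3 (n : ℕ) (f : EuclideanSpace ℝ (Fin n) → EuclideanSpace ℝ (Fin n))
    (Φ V : EuclideanSpace ℝ (Fin n) → ℝ) (hV : ContDiff ℝ 1 V)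
    (lam C : ℝ) (hlam : 0 < lam)
    (hPhi : ∀ y, Φ y ≤ V y)
    (hLyap : ∀ y, lam * ⟪f y, gradient V y⟫ ≤ C - V y)
    (S : Set (EuclideanSpace ℝ (Fin n))) (hS : IsCompact S)
    (hInv : ∀ x₀ ∈ S, ∃ γ : ℝ → EuclideanSpace ℝ (Fin n),
      γ 0 = x₀ ∧ (∀ t : ℝ, γ t ∈ S) ∧ (∀ t : ℝ, HasDerivAt γ (f (γ t)) t)) :
    ∀ x ∈ S, Φ x ≤ C :=
  stmt_3_general n f Φ V hV lam C hPhi hLyap S hS hInv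
end

section
/- Suppose V : ℝⁿ → ℝ is C¹ and satisfies λ (f(x) · ∇V(x)) ≤ C - V(x) on ℝⁿ for some λ > 0. If x : ℝ → ℝⁿ is a bounded C¹ solution of ẋ = f(x) defined for all t ∈ ℝ (both forward and backward time), then V(x(t)) ≤ C for all t ∈ ℝ. -/
/-! Along the trajectory, `g t = V (x t)` satisfies `λ g' ≤ C - g`, so `(g t - C) e^{t/λ}` is
nonincreasing. Comparing its value at `t` with its value at any earlier time `s`, where `g s` is
bounded by the boundedness of the trajectory, gives `(g t - C) e^{t/λ} ≤ (M - C) e^{s/λ}`, and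
the right-hand side tends to `0` as `s → -∞`. -/

open RealInnerProductSpace Real Filter

theorem HasGradientAt.hasDerivAt_comp {E : Type*} [NormedAddCommGroup E] [InnerProductSpace ℝ E]
    [CompleteSpace E] {V : E → ℝ} {V' : E} {x : ℝ → E} {x' : E} {t : ℝ}
    (hV : HasGradientAt V V' (x t)) (hx : HasDerivAt x x' t) :
    HasDerivAt (fun s => V (x s)) ⟪x', V'⟫ t := by
  have h := hV.hasFDerivAt.comp_hasDerivAt t hx
  rwa [InnerProductSpace.toDual_apply_apply, real_inner_comm] at h

theorem antitone_sub_mul_exp_div {g g' : ℝ → ℝ} {lam C : ℝ} (hlam : 0 < lam)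
    (hg : ∀ t, HasDerivAt g (g' t) t) (hineq : ∀ t, lam * g' t ≤ C - g t) :
    Antitone fun t => (g t - C) * exp (t / lam) := by
  have hderiv : ∀ t, HasDerivAt (fun t => (g t - C) * exp (t / lam))
      ((lam * g' t + (g t - C)) / lam * exp (t / lam)) t := by
    intro t
    have he : HasDerivAt (fun s => exp (s / lam)) (exp (t / lam) * (1 / lam)) t :=
      ((hasDerivAt_id t).div_const lam).exp
    refine (((hg t).sub_const C).mul he).congr_deriv ?_
    field_simp
  refine antitone_of_deriv_nonpos (fun t => (hderiv t).differentiableAt) fun t => ?_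
  rw [(hderiv t).deriv]
  exact mul_nonpos_of_nonpos_of_nonneg
    (div_nonpos_of_nonpos_of_nonneg (by linarith [hineq t]) hlam.le) (exp_pos _).le

theorem le_of_mul_deriv_le_sub_of_bddAbove {g g' : ℝ → ℝ} {lam C : ℝ} (hlam : 0 < lam)
    (hg : ∀ t, HasDerivAt g (g' t) t) (hineq : ∀ t, lam * g' t ≤ C - g t)
    (hbdd : BddAbove (Set.range g)) (t : ℝ) : g t ≤ C := by
  obtain ⟨M, hM⟩ := hbdd
  have hanti := antitone_sub_mul_exp_div hlam hg hineq
  have hlim : Tendsto (fun s => (M - C) * exp (s / lam)) atBot (nhds 0) := by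
    simpa using (tendsto_exp_atBot.comp (tendsto_id.atBot_div_const hlam)).const_mul (M - C)
  have hle : ∀ᶠ s in atBot, (g t - C) * exp (t / lam) ≤ (M - C) * exp (s / lam) := by
    filter_upwards [eventually_le_atBot t] with s hs
    exact (hanti hs).trans <| mul_le_mul_of_nonneg_right
      (by linarith [hM (Set.mem_range_self s)]) (exp_pos _).le
  have := ge_of_tendsto hlim hle
  nlinarith [exp_pos (t / lam)]

theorem bddAbove_range_comp_of_isBounded {E : Type*} [PseudoMetricSpace E] [ProperSpace E]
    {V : E → ℝ} (hV : Continuous V) {x : ℝ → E} (hx : Bornology.IsBounded (Set.range x)) :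
    BddAbove (Set.range fun t => V (x t)) :=
  (hx.isCompact_closure.bddAbove_image hV.continuousOn).mono <| by
    rintro _ ⟨t, rfl⟩
    exact ⟨x t, subset_closure (Set.mem_range_self t), rfl⟩

/-- Every bounded complete trajectory lies in the sublevel set `{V ≤ C}`. -/
theorem stmt_4 (n : ℕ) (f : EuclideanSpace ℝ (Fin n) → EuclideanSpace ℝ (Fin n))
    (V : EuclideanSpace ℝ (Fin n) → ℝ) (hV : ContDiff ℝ 1 V)
    (lam C : ℝ) (hlam : 0 < lam)
    (hLyap : ∀ y, lam * ⟪f y, gradient V y⟫ ≤ C - V y)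
    (x : ℝ → EuclideanSpace ℝ (Fin n)) (hx : ∀ t : ℝ, HasDerivAt x (f (x t)) t)
    (hbdd : Bornology.IsBounded (Set.range x)) :
    ∀ t : ℝ, V (x t) ≤ C :=
  le_of_mul_deriv_le_sub_of_bddAbove hlam
    (fun t => (hV.differentiable one_ne_zero).differentiableAt.hasGradientAt.hasDerivAt_comp (hx t))
    (fun t => hLyap (x t)) (bddAbove_range_comp_of_isBounded hV.continuous hbdd)
end

section
/- For the Lorenz system with standard parameters σ = 10, r = 28, β = 8/3 and Lorenz vector field f(x,y,z) = (σ(y-x), rx - y - xz, -βz + xy), the quadratic function V(x,y,z) = y² + (z - r)² satisfies f · ∇V ≤ -2(V - β²r²/(4(β-1))) on ℝ³ whenever β ≥ 2. Consequently the cylinder {(x,y,z) : y² + (z - r)² ≤ β²r²/(4(β-1))} is forward-invariant and absorbs every trajectory. -/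
/-!
Along the Lorenz flow the `x`-dependent terms of `f · ∇V` cancel, leaving
`-2y² - 2βz² + 2βrz`; completing the square in `z` gives the dissipation inequality
`V' ≤ -2 (V - K)` with `K = β²r²/(4(β-1))`, valid for every `β > 1`. Then
`(V - K) e^{2t}` is nonincreasing, so `V(t) - K ≤ (V(0) - K) e^{-2t}`, which yields both
forward invariance of `{V ≤ K}` and `limsup V ≤ K`.
-/

open Filter Real

theorem lorenz_lyapunov_bound (r β x y z : ℝ) (hβ : 1 < β) :
    2 * y * (r * x - y - x * z) + 2 * (z - r) * (-β * z + x * y) ≤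
      -2 * ((y ^ 2 + (z - r) ^ 2) - β ^ 2 * r ^ 2 / (4 * (β - 1))) := by
  have hβ₁ : 0 < β - 1 := by linarith
  have hgap : -2 * ((y ^ 2 + (z - r) ^ 2) - β ^ 2 * r ^ 2 / (4 * (β - 1))) -
      (2 * y * (r * x - y - x * z) + 2 * (z - r) * (-β * z + x * y)) =
        (2 * (β - 1) * z - (β - 2) * r) ^ 2 / (2 * (β - 1)) := by
    field_simp
    ring
  have hsq : 0 ≤ (2 * (β - 1) * z - (β - 2) * r) ^ 2 / (2 * (β - 1)) := by positivity
  linarith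

theorem HasDerivAt.sq_add_sub_sq {Y Z : ℝ → ℝ} {Y' Z' r t : ℝ} (hY : HasDerivAt Y Y' t)
    (hZ : HasDerivAt Z Z' t) :
    HasDerivAt (fun t => Y t ^ 2 + (Z t - r) ^ 2) (2 * Y t * Y' + 2 * (Z t - r) * Z') t := by
  refine ((hY.fun_pow 2).fun_add ((hZ.sub_const r).fun_pow 2)).congr_deriv ?_
  push_cast
  ring

section Dissipation

variable {V V' : ℝ → ℝ} {c K : ℝ}

theorem antitone_sub_mul_exp_of_deriv_le (hV : ∀ t, HasDerivAt V (V' t) t)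
    (hV' : ∀ t, V' t ≤ -c * (V t - K)) :
    Antitone fun t => (V t - K) * exp (c * t) := by
  have hW : ∀ t, HasDerivAt (fun t => (V t - K) * exp (c * t))
      ((V' t + c * (V t - K)) * exp (c * t)) t := by
    intro t
    have hexp : HasDerivAt (fun t => exp (c * t)) (exp (c * t) * c) t := by
      simpa using ((hasDerivAt_id t).const_mul c).exp
    exact (((hV t).sub_const K).fun_mul hexp).congr_deriv (by ring)
  refine antitone_of_deriv_nonpos (fun t => (hW t).differentiableAt) fun t => ?_
  rw [(hW t).deriv]
  exact mul_nonpos_of_nonpos_of_nonneg (by linarith [hV' t]) (exp_pos _).le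

theorem sub_le_mul_exp_neg_of_deriv_le (hV : ∀ t, HasDerivAt V (V' t) t)
    (hV' : ∀ t, V' t ≤ -c * (V t - K)) {t : ℝ} (ht : 0 ≤ t) :
    V t - K ≤ (V 0 - K) * exp (-(c * t)) := by
  have hmono := antitone_sub_mul_exp_of_deriv_le hV hV' ht
  simp only [mul_zero, exp_zero, mul_one] at hmono
  rw [exp_neg, ← div_eq_mul_inv]
  exact (le_div_iff₀ (exp_pos _)).mpr hmono

theorem le_of_deriv_le_of_initial_le (hV : ∀ t, HasDerivAt V (V' t) t)
    (hV' : ∀ t, V' t ≤ -c * (V t - K)) (h₀ : V 0 ≤ K) {t : ℝ} (ht : 0 ≤ t) :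
    V t ≤ K := by
  have hdecay := sub_le_mul_exp_neg_of_deriv_le hV hV' ht
  have hneg : (V 0 - K) * exp (-(c * t)) ≤ 0 :=
    mul_nonpos_of_nonpos_of_nonneg (by linarith) (exp_pos _).le
  linarith

theorem limsup_le_of_deriv_le (hV : ∀ t, HasDerivAt V (V' t) t)
    (hV' : ∀ t, V' t ≤ -c * (V t - K)) (hc : 0 < c)
    (hbdd : IsBoundedUnder (· ≥ ·) atTop V) :
    limsup V atTop ≤ K := by
  have hle : V ≤ᶠ[atTop] fun t => K + (V 0 - K) * exp (-(c * t)) := by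
    filter_upwards [eventually_ge_atTop 0] with t ht
    linarith [sub_le_mul_exp_neg_of_deriv_le hV hV' ht]
  have htend : Tendsto (fun t => K + (V 0 - K) * exp (-(c * t))) atTop (nhds K) := by
    have hexp := tendsto_exp_neg_atTop_nhds_zero.comp (tendsto_id.const_mul_atTop hc)
    simpa using (hexp.const_mul (V 0 - K)).const_add K
  calc limsup V atTop
      ≤ limsup (fun t => K + (V 0 - K) * exp (-(c * t))) atTop :=
        limsup_le_limsup hle hbdd.isCoboundedUnder_le htend.isBoundedUnder_le
    _ = K := htend.limsup_eq

end Dissipation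

theorem stmt_6_general (σ r β : ℝ) (hβ : 2 ≤ β) :
    (∀ x y z : ℝ,
      2 * y * (r * x - y - x * z) + 2 * (z - r) * (-β * z + x * y) ≤
        -2 * ((y ^ 2 + (z - r) ^ 2) - β ^ 2 * r ^ 2 / (4 * (β - 1)))) ∧
    (∀ X Y Z : ℝ → ℝ,
      (∀ t : ℝ, HasDerivAt X (σ * (Y t - X t)) t) →
      (∀ t : ℝ, HasDerivAt Y (r * X t - Y t - X t * Z t) t) →
      (∀ t : ℝ, HasDerivAt Z (-β * Z t + X t * Y t) t) →
      (((Y 0) ^ 2 + (Z 0 - r) ^ 2 ≤ β ^ 2 * r ^ 2 / (4 * (β - 1)) →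
          ∀ t : ℝ, 0 ≤ t →
            (Y t) ^ 2 + (Z t - r) ^ 2 ≤ β ^ 2 * r ^ 2 / (4 * (β - 1))) ∧
        limsup (fun t => (Y t) ^ 2 + (Z t - r) ^ 2) atTop ≤
          β ^ 2 * r ^ 2 / (4 * (β - 1)))) := by
  have hβ₁ : 1 < β := by linarith
  refine ⟨fun x y z => lorenz_lyapunov_bound r β x y z hβ₁, fun X Y Z _ hY hZ => ?_⟩
  have hV := fun t => (hY t).sq_add_sub_sq (r := r) (hZ t)
  have hV' := fun t => lorenz_lyapunov_bound r β (X t) (Y t) (Z t) hβ₁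
  have hbdd : IsBoundedUnder (· ≥ ·) atTop fun t => (Y t) ^ 2 + (Z t - r) ^ 2 :=
    isBoundedUnder_of ⟨0, fun t => by positivity⟩
  exact ⟨fun h₀ _ ht => le_of_deriv_le_of_initial_le hV hV' h₀ ht,
    limsup_le_of_deriv_le hV hV' two_pos hbdd⟩

/-- The classical attracting cylinder `y² + (z-r)² ≤ β²r²/(4(β-1))` for the
Lorenz equations at the standard parameters `σ = 10`, `r = 28`, `β = 8/3`:
the quadratic `V = y² + (z-r)²` satisfies `f·∇V ≤ -2(V - β²r²/(4(β-1)))`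
whenever `β ≥ 2`, so the cylinder is forward invariant and absorbs trajectories. -/
theorem stmt_6 (σ r β : ℝ) (hσ : σ = 10) (hr : r = 28) (hβval : β = 8 / 3)
    (hβ : 2 ≤ β) :
    (∀ x y z : ℝ,
      2 * y * (r * x - y - x * z) + 2 * (z - r) * (-β * z + x * y) ≤
        -2 * ((y ^ 2 + (z - r) ^ 2) - β ^ 2 * r ^ 2 / (4 * (β - 1)))) ∧
    (∀ X Y Z : ℝ → ℝ,
      (∀ t : ℝ, HasDerivAt X (σ * (Y t - X t)) t) →
      (∀ t : ℝ, HasDerivAt Y (r * X t - Y t - X t * Z t) t) →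
      (∀ t : ℝ, HasDerivAt Z (-β * Z t + X t * Y t) t) →
      (((Y 0) ^ 2 + (Z 0 - r) ^ 2 ≤ β ^ 2 * r ^ 2 / (4 * (β - 1)) →
          ∀ t : ℝ, 0 ≤ t →
            (Y t) ^ 2 + (Z t - r) ^ 2 ≤ β ^ 2 * r ^ 2 / (4 * (β - 1))) ∧
        limsup (fun t => (Y t) ^ 2 + (Z t - r) ^ 2) atTop ≤
          β ^ 2 * r ^ 2 / (4 * (β - 1)))) :=
  stmt_6_general σ r β hβ
end
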